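/- arXiv:1207.4983 — 2 statements merged into one kernel-verified Lean document; each statement's English description precedes it below -/
import Mathlib

section
/- Let (Ω, ℬ, μ) be a measure space and let f, g ∈ 𝓛⁺ (i.e., ∫ min(1, f²) dμ < ∞ and similarly for g). Let a be the truncation a(u) = max(-1, min(1, u)). Then ∫_Ω |a(f+g) - a(f) - a(g)| dμ < ∞, and moreover |∫_Ω (a(f+g) - a(f) - a(g)) dμ| ≤ 3·d(f+g)² + 2·(d(f) + d(g))·d(f+g), where d(h) = (∫ min(1, h²) dμ)^{1/2}. -/
/-!
Write `clip u = max (-1) (min 1 u)` and `F = f + g`. Pointwise, the defect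
`clip F - clip f - clip g` vanishes where `|f|, |g|, |F| ≤ 1`, is at most `3` where `|F| > 1`
(and there `min 1 F² = 1`), and is at most `2 |F|` otherwise, because `|clip f + clip g| ≤ |F|`;
in the last case `min 1 f² + min 1 g² ≥ 1`, which stands in for the indicator of
`{|f| > 1} ∪ {|g| > 1}`. Integrating, the defect is dominated by
`3 min 1 F² + 2 min 1 |F| (min 1 f² + min 1 g²)`, and Cauchy–Schwarz bounds
`∫ min 1 |F| · min 1 h²` by `d(F) d(h)`, since `(min 1 |F|)² = min 1 F²` and `(min 1 h²)² ≤ min 1 h²`.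
-/

open MeasureTheory

/-- The truncated L² size `d(h) = (∫ min(1,h²) dμ)^{1/2}`. -/
noncomputable def truncNorm {Ω : Type*} [MeasurableSpace Ω] (μ : Measure Ω)
    (h : Ω → ℝ) : ℝ :=
  Real.sqrt (∫⁻ ω, ENNReal.ofReal (min 1 (h ω ^ 2)) ∂μ).toReal

def clip (u : ℝ) : ℝ := max (-1) (min 1 u)

theorem measurable_clip : Measurable clip :=
  measurable_const.max (measurable_const.min measurable_id)

theorem abs_clip_le_one (u : ℝ) : |clip u| ≤ 1 :=
  abs_le.2 ⟨le_max_left _ _, max_le (by norm_num) (min_le_left _ _)⟩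

theorem clip_eq_self {u : ℝ} (hu : |u| ≤ 1) : clip u = u := by
  rw [abs_le] at hu
  rw [clip, min_eq_right hu.2, max_eq_right hu.1]

theorem abs_clip_add_clip_le (x y : ℝ) : |clip x + clip y| ≤ |x + y| := by
  simp only [clip, max_def, min_def]
  rcases abs_cases (x + y) with ⟨h, _⟩ | ⟨h, _⟩ <;> rw [h, abs_le] <;>
    split_ifs <;> constructor <;> linarith

theorem min_one_sq_eq_one {t : ℝ} (ht : 1 ≤ |t|) : min 1 (t ^ 2) = 1 :=
  min_eq_left ((one_le_sq_iff_one_le_abs t).2 ht)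

theorem min_one_abs_sq (t : ℝ) : min 1 |t| ^ 2 = min 1 (t ^ 2) := by
  rcases le_total 1 |t| with ht | ht
  · rw [min_eq_left ht, min_one_sq_eq_one ht, one_pow]
  · rw [min_eq_right ht, min_eq_right ((sq_le_one_iff_abs_le_one t).2 ht), sq_abs]

theorem min_one_sq_add_le (x y : ℝ) :
    min 1 ((x + y) ^ 2) ≤ 2 * min 1 (x ^ 2) + 2 * min 1 (y ^ 2) := by
  rcases le_total 1 (x ^ 2) with hx | hx <;> rcases le_total 1 (y ^ 2) with hy | hy <;>
    simp only [min_eq_left, min_eq_right, hx, hy] <;>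
    nlinarith [min_le_left 1 ((x + y) ^ 2), min_le_right 1 ((x + y) ^ 2), sq_nonneg (x - y)]

theorem abs_clip_add_sub_clip_sub_clip_le (x y : ℝ) :
    |clip (x + y) - clip x - clip y| ≤
      3 * min 1 ((x + y) ^ 2) +
        2 * (min 1 |x + y| * min 1 (x ^ 2) + min 1 |x + y| * min 1 (y ^ 2)) := by
  rw [← mul_add]
  rcases lt_or_ge 1 |x + y| with hxy | hxy
  · obtain ⟨h₁, h₁'⟩ := abs_le.1 (abs_clip_le_one (x + y))
    obtain ⟨h₂, h₂'⟩ := abs_le.1 (abs_clip_le_one x)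
    obtain ⟨h₃, h₃'⟩ := abs_le.1 (abs_clip_le_one y)
    have hdefect : |clip (x + y) - clip x - clip y| ≤ 3 := abs_le.2 ⟨by linarith, by linarith⟩
    rw [min_one_sq_eq_one hxy.le, mul_one]
    exact hdefect.trans (le_add_of_nonneg_right (by positivity))
  by_cases hsmall : |x| ≤ 1 ∧ |y| ≤ 1
  · rw [clip_eq_self hxy, clip_eq_self hsmall.1, clip_eq_self hsmall.2, sub_sub, sub_self,
      abs_zero]
    positivity
  have hlarge : 1 ≤ min 1 (x ^ 2) + min 1 (y ^ 2) := by
    rcases not_and_or.1 hsmall with hx | hy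
    · rw [min_one_sq_eq_one (not_le.1 hx).le]; exact le_add_of_nonneg_right (by positivity)
    · rw [min_one_sq_eq_one (not_le.1 hy).le]; exact le_add_of_nonneg_left (by positivity)
  calc |clip (x + y) - clip x - clip y| = |(x + y) - (clip x + clip y)| := by
        rw [clip_eq_self hxy, sub_sub]
    _ ≤ |x + y| + |clip x + clip y| := abs_sub _ _
    _ ≤ 2 * (min 1 |x + y| * 1) := by rw [min_eq_right hxy]; linarith [abs_clip_add_clip_le x y]
    _ ≤ 2 * (min 1 |x + y| * (min 1 (x ^ 2) + min 1 (y ^ 2))) := by gcongr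
    _ ≤ _ := le_add_of_nonneg_left (by positivity)

section
variable {Ω : Type*} [MeasurableSpace Ω] {μ : Measure Ω}

theorem integral_mul_le_sqrt_mul_sqrt {u v : Ω → ℝ} (hu : 0 ≤ᵐ[μ] u) (hv : 0 ≤ᵐ[μ] v)
    (hu₂ : MemLp u 2 μ) (hv₂ : MemLp v 2 μ) :
    ∫ ω, u ω * v ω ∂μ ≤ √(∫ ω, u ω ^ 2 ∂μ) * √(∫ ω, v ω ^ 2 ∂μ) := by
  have := integral_mul_le_Lp_mul_Lq_of_nonneg Real.HolderConjugate.two_two hu hv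
    (by simpa using hu₂) (by simpa using hv₂)
  simpa only [Real.sqrt_eq_rpow, ← one_div, Real.rpow_two] using this

theorem integrable_min_one_sq {h : Ω → ℝ} (hh : Measurable h)
    (hi : ∫⁻ ω, ENNReal.ofReal (min 1 (h ω ^ 2)) ∂μ < ⊤) :
    Integrable (fun ω => min 1 (h ω ^ 2)) μ :=
  ⟨(measurable_const.min (hh.pow_const 2)).aestronglyMeasurable,
    (hasFiniteIntegral_iff_ofReal (.of_forall fun _ => by positivity)).2 hi⟩

theorem truncNorm_eq_sqrt_integral {h : Ω → ℝ} (hh : Measurable h) :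
    truncNorm μ h = √(∫ ω, min 1 (h ω ^ 2) ∂μ) := by
  rw [truncNorm, integral_eq_lintegral_of_nonneg_ae (.of_forall fun _ => by positivity)
    (measurable_const.min (hh.pow_const 2)).aestronglyMeasurable]

theorem integrable_min_one_sq_add {f g : Ω → ℝ} (hf : Measurable f) (hg : Measurable g)
    (hf₂ : Integrable (fun ω => min 1 (f ω ^ 2)) μ)
    (hg₂ : Integrable (fun ω => min 1 (g ω ^ 2)) μ) :
    Integrable (fun ω => min 1 ((f ω + g ω) ^ 2)) μ :=
  ((hf₂.const_mul 2).add (hg₂.const_mul 2)).mono'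
    (measurable_const.min ((hf.add hg).pow_const 2)).aestronglyMeasurable
    (.of_forall fun _ => by rw [Real.norm_of_nonneg (by positivity)]; exact min_one_sq_add_le _ _)

theorem integrable_min_one_abs_mul {F h : Ω → ℝ} (hF : Measurable F)
    (hh₂ : Integrable (fun ω => min 1 (h ω ^ 2)) μ) :
    Integrable (fun ω => min 1 |F ω| * min 1 (h ω ^ 2)) μ :=
  hh₂.bdd_mul (measurable_const.min hF.abs).aestronglyMeasurable
    (.of_forall fun _ => by rw [Real.norm_of_nonneg (by positivity)]; exact min_le_left _ _)

theorem integral_min_one_abs_mul_le {F h : Ω → ℝ} (hF : Measurable F)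
    (hF₂ : Integrable (fun ω => min 1 (F ω ^ 2)) μ)
    (hh₂ : Integrable (fun ω => min 1 (h ω ^ 2)) μ) :
    ∫ ω, min 1 |F ω| * min 1 (h ω ^ 2) ∂μ ≤
      √(∫ ω, min 1 (F ω ^ 2) ∂μ) * √(∫ ω, min 1 (h ω ^ 2) ∂μ) := by
  have hsq_le : ∀ ω, min 1 (h ω ^ 2) ^ 2 ≤ min 1 (h ω ^ 2) := fun ω =>
    pow_le_of_le_one (by positivity) (min_le_left _ _) two_ne_zero
  have hu : MemLp (fun ω => min 1 |F ω|) 2 μ :=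
    (memLp_two_iff_integrable_sq (measurable_const.min hF.abs).aestronglyMeasurable).2
      (by simpa only [min_one_abs_sq] using hF₂)
  have hv : MemLp (fun ω => min 1 (h ω ^ 2)) 2 μ :=
    (memLp_two_iff_integrable_sq hh₂.aestronglyMeasurable).2 <|
      hh₂.mono' (hh₂.aestronglyMeasurable.pow 2) (.of_forall fun ω => by
        rw [Real.norm_of_nonneg (by positivity)]; exact hsq_le ω)
  calc ∫ ω, min 1 |F ω| * min 1 (h ω ^ 2) ∂μ
      ≤ √(∫ ω, min 1 |F ω| ^ 2 ∂μ) * √(∫ ω, min 1 (h ω ^ 2) ^ 2 ∂μ) :=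
        integral_mul_le_sqrt_mul_sqrt (.of_forall fun _ => by positivity)
          (.of_forall fun _ => by positivity) hu hv
    _ ≤ √(∫ ω, min 1 (F ω ^ 2) ∂μ) * √(∫ ω, min 1 (h ω ^ 2) ∂μ) := by
        simp only [min_one_abs_sq]
        exact mul_le_mul_of_nonneg_left
          (Real.sqrt_le_sqrt (integral_mono hv.integrable_sq hh₂ hsq_le)) (Real.sqrt_nonneg _)

theorem integrable_clip_defect_bound {f g : Ω → ℝ} (hf : Measurable f) (hg : Measurable g)
    (hf₂ : Integrable (fun ω => min 1 (f ω ^ 2)) μ)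
    (hg₂ : Integrable (fun ω => min 1 (g ω ^ 2)) μ) :
    Integrable (fun ω => 3 * min 1 ((f ω + g ω) ^ 2) +
      2 * (min 1 |f ω + g ω| * min 1 (f ω ^ 2) + min 1 |f ω + g ω| * min 1 (g ω ^ 2))) μ :=
  ((integrable_min_one_sq_add hf hg hf₂ hg₂).const_mul 3).add
    (((integrable_min_one_abs_mul (hf.add hg) hf₂).add
      (integrable_min_one_abs_mul (hf.add hg) hg₂)).const_mul 2)

theorem integral_clip_defect_bound_le {f g : Ω → ℝ} (hf : Measurable f) (hg : Measurable g)
    (hf₂ : Integrable (fun ω => min 1 (f ω ^ 2)) μ)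
    (hg₂ : Integrable (fun ω => min 1 (g ω ^ 2)) μ) :
    ∫ ω, 3 * min 1 ((f ω + g ω) ^ 2) +
        2 * (min 1 |f ω + g ω| * min 1 (f ω ^ 2) + min 1 |f ω + g ω| * min 1 (g ω ^ 2)) ∂μ ≤
      3 * ∫ ω, min 1 ((f ω + g ω) ^ 2) ∂μ +
        2 * (√(∫ ω, min 1 ((f ω + g ω) ^ 2) ∂μ) * √(∫ ω, min 1 (f ω ^ 2) ∂μ) +
          √(∫ ω, min 1 ((f ω + g ω) ^ 2) ∂μ) * √(∫ ω, min 1 (g ω ^ 2) ∂μ)) := by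
  have hF : Measurable fun ω => f ω + g ω := hf.add hg
  have hF₂ := integrable_min_one_sq_add hf hg hf₂ hg₂
  have hqf := integrable_min_one_abs_mul hF hf₂
  have hqg := integrable_min_one_abs_mul hF hg₂
  have hqfg : Integrable (fun ω =>
      min 1 |f ω + g ω| * min 1 (f ω ^ 2) + min 1 |f ω + g ω| * min 1 (g ω ^ 2)) μ :=
    hqf.add hqg
  rw [integral_add (hF₂.const_mul 3) (hqfg.const_mul 2), integral_const_mul,
    integral_const_mul, integral_add hqf hqg]
  gcongr
  · exact integral_min_one_abs_mul_le hF hF₂ hf₂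
  · exact integral_min_one_abs_mul_le hF hF₂ hg₂

end

theorem stmt_13 {Ω : Type*} [MeasurableSpace Ω] (μ : Measure Ω)
    (f g : Ω → ℝ) (hfm : Measurable f) (hgm : Measurable g)
    (hfi : ∫⁻ ω, ENNReal.ofReal (min 1 (f ω ^ 2)) ∂μ < ⊤)
    (hgi : ∫⁻ ω, ENNReal.ofReal (min 1 (g ω ^ 2)) ∂μ < ⊤)
    (a : ℝ → ℝ) (ha : ∀ u, a u = max (-1) (min 1 u)) :
    Integrable (fun ω => a (f ω + g ω) - a (f ω) - a (g ω)) μ ∧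
    |∫ ω, (a (f ω + g ω) - a (f ω) - a (g ω)) ∂μ| ≤
      3 * truncNorm μ (fun ω => f ω + g ω) ^ 2 +
      2 * (truncNorm μ f + truncNorm μ g) * truncNorm μ (fun ω => f ω + g ω) := by
  obtain rfl : a = clip := funext ha
  have hF : Measurable fun ω => f ω + g ω := hfm.add hgm
  have hf₂ := integrable_min_one_sq hfm hfi
  have hg₂ := integrable_min_one_sq hgm hgi
  have hbound := integrable_clip_defect_bound hfm hgm hf₂ hg₂
  have hs : Integrable (fun ω => clip (f ω + g ω) - clip (f ω) - clip (g ω)) μ :=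
    hbound.mono' (((measurable_clip.comp hF).sub (measurable_clip.comp hfm)).sub
      (measurable_clip.comp hgm)).aestronglyMeasurable
      (.of_forall fun _ => abs_clip_add_sub_clip_sub_clip_le _ _)
  refine ⟨hs, ?_⟩
  rw [truncNorm_eq_sqrt_integral hF, truncNorm_eq_sqrt_integral hfm,
    truncNorm_eq_sqrt_integral hgm, Real.sq_sqrt (integral_nonneg fun _ => by positivity)]
  calc |∫ ω, clip (f ω + g ω) - clip (f ω) - clip (g ω) ∂μ|
      ≤ ∫ ω, |clip (f ω + g ω) - clip (f ω) - clip (g ω)| ∂μ := abs_integral_le_integral_abs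
    _ ≤ _ := integral_mono hs.abs hbound fun _ => abs_clip_add_sub_clip_sub_clip_le _ _
    _ ≤ _ := integral_clip_defect_bound_le hfm hgm hf₂ hg₂
    _ = _ := by ring
end

section
/- Let (Ω, ℬ, μ) be a measure space where Ω = ℝ with the Borel σ-algebra, and let Ψ : ℝ → ℝ be a measurable map such that for every Borel set A, μ(Ψ⁻¹(A) Δ A) = 0 (Ψ induces the identity on the measure algebra). Then Ψ(x) = x for μ-almost every x. -/
open MeasureTheory

theorem stmt_18 (μ : Measure ℝ) (Ψ : ℝ → ℝ) (hΨ : Measurable Ψ)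
    (h : ∀ A : Set ℝ, MeasurableSet A → μ (symmDiff (Ψ ⁻¹' A) A) = 0) :
    ∀ᵐ x ∂μ, Ψ x = x := by
  have hq : ∀ q : ℚ, ∀ᵐ x ∂μ, (Ψ x ≤ (q : ℝ) ↔ x ≤ (q : ℝ)) := by
    intro q
    have hnull := h (Set.Iic (q : ℝ)) measurableSet_Iic
    rw [ae_iff]
    refine measure_mono_null ?_ hnull
    intro x hx
    simp only [Set.mem_setOf_eq, not_iff] at hx
    simp only [Set.symmDiff_def, Set.mem_union, Set.mem_diff, Set.mem_preimage,
      Set.mem_Iic]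
    tauto
  filter_upwards [ae_all_iff.mpr hq] with x hx
  by_contra hne
  rcases lt_or_gt_of_ne hne with hlt | hgt
  · obtain ⟨q, hq1, hq2⟩ := exists_rat_btwn hlt
    exact absurd ((hx q).mp hq1.le) (not_le.mpr hq2)
  · obtain ⟨q, hq1, hq2⟩ := exists_rat_btwn hgt
    exact absurd ((hx q).mpr hq1.le) (not_le.mpr hq2)
end
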